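/- Let X be a Banach space. If there exists i ≥ 0 such that Ker(π_i*) = {0}, then Ker(π_n*) = {0} for all n ≥ 0. Here π_k : X^{*k} → X^{*(k+2)} is the canonical embedding and π_k* : X^{*(k+3)} → X^{*(k+1)} its adjoint. -/

import Mathlib

open NormedSpace

noncomputable section

set_option maxHeartbeats 1000000

/-- The adjoint (transpose) of a continuous linear map between normed spaces:
`(adjointMap f) g = g ∘ f`. -/
def adjointMap {X Y : Type*} [SeminormedAddCommGroup X] [NormedSpace ℝ X]
    [SeminormedAddCommGroup Y] [NormedSpace ℝ Y] (f : X →L[ℝ] Y) :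
    StrongDual ℝ Y →L[ℝ] StrongDual ℝ X :=
  (ContinuousLinearMap.compL ℝ X Y ℝ).flip f

/-- A bundled Banach space over `ℝ`. -/
structure BanachPkg where
  carrier : Type
  [grp : NormedAddCommGroup carrier]
  [mod : NormedSpace ℝ carrier]
  [comp : CompleteSpace carrier]

attribute [instance] BanachPkg.grp BanachPkg.mod BanachPkg.comp

/-- The dual of a bundled Banach space. -/
def BanachPkg.dual (P : BanachPkg) : BanachPkg := ⟨StrongDual ℝ P.carrier⟩

/-- `iterDual P n` is the `n`-th iterated dual `X^{*n}` of `X = P.carrier`. -/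
def iterDual (P : BanachPkg) : ℕ → BanachPkg
  | 0 => P
  | n + 1 => (iterDual P n).dual

/-- `π_n : X^{*n} → X^{*(n+2)}`, the canonical evaluation map. -/
def piMap (P : BanachPkg) (n : ℕ) :
    (iterDual P n).carrier →L[ℝ] (iterDual P (n + 2)).carrier :=
  inclusionInDoubleDual ℝ (iterDual P n).carrier

/-- `π_n* : X^{*(n+3)} → X^{*(n+1)}`, the adjoint of `π_n`. -/
def piAdj (P : BanachPkg) (n : ℕ) :
    (iterDual P (n + 3)).carrier →L[ℝ] (iterDual P (n + 1)).carrier :=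
  adjointMap (piMap P n)

/-!
Write `J` for the canonical embedding `X → X**`. Its adjoint `J* : X*** → X*` is a left inverse
of the embedding of `X*` into its bidual, so `J*` is injective as soon as `X*` is reflexive; and
`X*` is reflexive when `X` is, because a functional on `X** = J X` is determined by its composite
with `J`. Conversely, if `J*` is injective then `X` is reflexive: `J X` is closed (`J` is an
isometry on a Banach space), and by Hahn–Banach a closed subspace annihilated only by the zero
functional is the whole space. So `Ker J* = 0`, reflexivity of `X` and reflexivity of `X*` are
equivalent, and along the tower of iterated duals they hold at one level iff at every level.
-/

section

variable {X Y : Type*} [SeminormedAddCommGroup X] [NormedSpace ℝ X] [SeminormedAddCommGroup Y]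
  [NormedSpace ℝ Y]

theorem Submodule.eq_top_of_isClosed_of_forall_dual_eq_zero (S : Submodule ℝ Y)
    (hS : IsClosed (S : Set Y)) (h : ∀ f : StrongDual ℝ Y, (∀ y ∈ S, f y = 0) → f = 0) :
    S = ⊤ := by
  refine Submodule.eq_top_iff'.mpr fun y => ?_
  by_contra hy
  have hq : S.mkQ y ≠ 0 := by simpa [Submodule.Quotient.mk_eq_zero] using hy
  -- `hS` enters as the instance making `Y ⧸ S` Hausdorff, so that its dual separates points.
  obtain ⟨g, hg⟩ := SeparatingDual.exists_ne_zero (R := ℝ) hq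
  have hvanish : ∀ z ∈ S, g.comp S.mkQL z = 0 := fun z hz => by
    simp [(Submodule.Quotient.mk_eq_zero S).mpr hz]
  exact hg (by simpa using congr($(h _ hvanish) y))

theorem surjective_of_isClosed_range_of_ker_adjointMap_eq_bot (f : X →L[ℝ] Y)
    (hf : IsClosed (Set.range f)) (h : LinearMap.ker (adjointMap f).toLinearMap = ⊥) :
    Function.Surjective f := by
  have hrange : LinearMap.range f.toLinearMap = ⊤ := by
    refine (LinearMap.range f.toLinearMap).eq_top_of_isClosed_of_forall_dual_eq_zero hf
      fun g hg => (Submodule.mem_bot ℝ).mp (h ▸ LinearMap.mem_ker.mpr ?_)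
    ext x
    exact hg (f x) ⟨x, rfl⟩
  exact LinearMap.range_eq_top.mp hrange

theorem leftInverse_adjointMap_inclusionInDoubleDual :
    Function.LeftInverse
      (adjointMap (Y := StrongDual ℝ (StrongDual ℝ X)) (inclusionInDoubleDual ℝ X))
      (inclusionInDoubleDual ℝ (StrongDual ℝ X)) :=
  fun _ => rfl

theorem ker_adjointMap_inclusionInDoubleDual_eq_bot
    (h : Function.Surjective (inclusionInDoubleDual ℝ (StrongDual ℝ X))) :
    LinearMap.ker
      (adjointMap (Y := StrongDual ℝ (StrongDual ℝ X)) (inclusionInDoubleDual ℝ X)).toLinearMap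
      = ⊥ :=
  LinearMap.ker_eq_bot.mpr
    (leftInverse_adjointMap_inclusionInDoubleDual.rightInverse_of_surjective h).injective

theorem surjective_inclusionInDoubleDual_dual
    (h : Function.Surjective (inclusionInDoubleDual ℝ X)) :
    Function.Surjective (inclusionInDoubleDual ℝ (StrongDual ℝ X)) := by
  intro F
  refine ⟨adjointMap (Y := StrongDual ℝ (StrongDual ℝ X)) (inclusionInDoubleDual ℝ X) F, ?_⟩
  ext Φ
  obtain ⟨x, rfl⟩ := h Φ
  rfl

end

section

variable {X : Type*} [NormedAddCommGroup X] [NormedSpace ℝ X] [CompleteSpace X]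

theorem isClosed_range_inclusionInDoubleDual :
    IsClosed (Set.range (inclusionInDoubleDual ℝ X)) := by
  have hiso : Isometry (inclusionInDoubleDual ℝ X) := (inclusionInDoubleDualLi ℝ).isometry
  exact hiso.isClosedEmbedding.isClosed_range

theorem ker_adjointMap_inclusionInDoubleDual_eq_bot_iff :
    LinearMap.ker
      (adjointMap (Y := StrongDual ℝ (StrongDual ℝ X)) (inclusionInDoubleDual ℝ X)).toLinearMap
      = ⊥ ↔ Function.Surjective (inclusionInDoubleDual ℝ X) :=
  ⟨surjective_of_isClosed_range_of_ker_adjointMap_eq_bot _ isClosed_range_inclusionInDoubleDual,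
    fun h => ker_adjointMap_inclusionInDoubleDual_eq_bot (surjective_inclusionInDoubleDual_dual h)⟩

theorem surjective_inclusionInDoubleDual_dual_iff :
    Function.Surjective (inclusionInDoubleDual ℝ (StrongDual ℝ X)) ↔
      Function.Surjective (inclusionInDoubleDual ℝ X) :=
  ⟨fun h => ker_adjointMap_inclusionInDoubleDual_eq_bot_iff.mp
    (ker_adjointMap_inclusionInDoubleDual_eq_bot h), surjective_inclusionInDoubleDual_dual⟩

end

/-- if `Ker(π_i*) = {0}` for some `i ≥ 0`, then
`Ker(π_n*) = {0}` for every `n ≥ 0`. -/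
theorem ker_adjoint_bot_propagates (P : BanachPkg)
    (h : ∃ i : ℕ, LinearMap.ker (piAdj P i).toLinearMap = ⊥) :
    ∀ n : ℕ, LinearMap.ker (piAdj P n).toLinearMap = ⊥ := by
  obtain ⟨i, hi⟩ := h
  have reflexive_iff (n : ℕ) : Function.Surjective (inclusionInDoubleDual ℝ (iterDual P n).carrier)
      ↔ Function.Surjective (inclusionInDoubleDual ℝ P.carrier) := by
    induction n with
    | zero => rfl
    | succ n ih => exact surjective_inclusionInDoubleDual_dual_iff.trans ih
  intro n
  exact ker_adjointMap_inclusionInDoubleDual_eq_bot_iff.mpr <| (reflexive_iff n).mpr <|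
    (reflexive_iff i).mp <| ker_adjointMap_inclusionInDoubleDual_eq_bot_iff.mp hi
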